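/- arXiv:2407.01763 — 2 statements merged into one kernel-verified Lean document; each statement's English description precedes it below -/
import Mathlib

section
/- Fix an integer K ≥ 1, vectors φ_1, …, φ_L ∈ ℝ^K, and nonnegative reals I_1, …, I_L. Then the negative log-Whittle likelihood L(Y) = Σ_{ℓ=1}^{L} ( I_ℓ · exp(−⟨φ_ℓ, Y⟩) + ⟨φ_ℓ, Y⟩ ) is a convex function on ℝ^K. If moreover I_ℓ > 0 for every ℓ and the vectors φ_1, …, φ_L span ℝ^K, then L is strictly convex on ℝ^K. -/
/-!
Each summand is `t ↦ I_ℓ e^{-t} + t` evaluated at `t = ⟪φ_ℓ, Y⟫`, so `L` is a separable sum of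
convex functions of one variable composed with the linear map `Y ↦ (⟪φ_ℓ, Y⟫)_ℓ`. For `I_ℓ > 0`
each summand is strictly convex, hence so is the separable sum, and when the `φ_ℓ` span the
space the linear map is injective, which transfers strict convexity to `L`.
-/

open Real Set

theorem StrictConvexOn.comp_linearMap {𝕜 E F β : Type*} [Semiring 𝕜] [PartialOrder 𝕜]
    [AddCommMonoid E] [AddCommMonoid F] [AddCommMonoid β] [PartialOrder β] [Module 𝕜 E]
    [Module 𝕜 F] [SMul 𝕜 β] {f : F → β} {s : Set F} (hf : StrictConvexOn 𝕜 s f)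
    {g : E →ₗ[𝕜] F} (hg : Function.Injective g) : StrictConvexOn 𝕜 (g ⁻¹' s) (f ∘ g) :=
  ⟨hf.1.linear_preimage g, fun x hx y hy hxy a b ha hb hab => by
    simpa only [Function.comp_apply, map_add, map_smul] using
      hf.2 hx hy (hg.ne hxy) ha hb hab⟩

section LinearOrderedField

variable {𝕜 E ι : Type*} [Field 𝕜] [LinearOrder 𝕜] [IsStrictOrderedRing 𝕜]

theorem StrictConvexOn.const_mul [AddCommMonoid E] [SMul 𝕜 E] {f : E → 𝕜} {s : Set E}
    (hf : StrictConvexOn 𝕜 s f) {c : 𝕜} (hc : 0 < c) : StrictConvexOn 𝕜 s fun x => c * f x :=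
  ⟨hf.1, fun x hx y hy hxy a b ha hb hab => by
    have := mul_lt_mul_of_pos_left (hf.2 hx hy hxy ha hb hab) hc
    simp only [smul_eq_mul] at this ⊢
    linarith⟩

variable [Fintype ι]

theorem convexOn_sum_pi {g : ι → 𝕜 → 𝕜} (hg : ∀ i, ConvexOn 𝕜 univ (g i)) :
    ConvexOn 𝕜 univ fun z : ι → 𝕜 => ∑ i, g i (z i) :=
  ⟨convex_univ, fun z _ w _ a b ha hb hab => by
    simp only [Pi.add_apply, Pi.smul_apply, smul_eq_mul, Finset.mul_sum,
      ← Finset.sum_add_distrib]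
    exact Finset.sum_le_sum fun i _ => (hg i).2 (mem_univ _) (mem_univ _) ha hb hab⟩

theorem strictConvexOn_sum_pi {g : ι → 𝕜 → 𝕜} (hg : ∀ i, StrictConvexOn 𝕜 univ (g i)) :
    StrictConvexOn 𝕜 univ fun z : ι → 𝕜 => ∑ i, g i (z i) :=
  ⟨convex_univ, fun z _ w _ hzw a b ha hb hab => by
    obtain ⟨i, hi⟩ := Function.ne_iff.1 hzw
    simp only [Pi.add_apply, Pi.smul_apply, smul_eq_mul, Finset.mul_sum,
      ← Finset.sum_add_distrib]
    exact Finset.sum_lt_sum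
      (fun j _ => (hg j).convexOn.2 (mem_univ _) (mem_univ _) ha.le hb.le hab)
      ⟨i, Finset.mem_univ _, (hg i).2 (mem_univ _) (mem_univ _) hi ha hb hab⟩⟩

end LinearOrderedField

theorem convexOn_const_mul_exp_neg_add {c : ℝ} (hc : 0 ≤ c) :
    ConvexOn ℝ univ fun t => c * exp (-t) + t :=
  ((convexOn_exp.comp_linearMap (-LinearMap.id)).smul hc).add (convexOn_id convex_univ)

theorem strictConvexOn_const_mul_exp_neg_add {c : ℝ} (hc : 0 < c) :
    StrictConvexOn ℝ univ fun t => c * exp (-t) + t :=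
  ((strictConvexOn_exp.comp_linearMap (g := -LinearMap.id) neg_injective).const_mul
    hc).add_convexOn (convexOn_id convex_univ)

theorem LinearMap.pi_innerₗ_injective {E ι : Type*} [NormedAddCommGroup E]
    [InnerProductSpace ℝ E] {φ : ι → E} (hφ : Submodule.span ℝ (Set.range φ) = ⊤) :
    Function.Injective (LinearMap.pi fun i => innerₗ E (φ i)) := by
  intro x y hxy
  have h : (innerₗ E).flip x = (innerₗ E).flip y :=
    LinearMap.ext_on_range hφ fun i => congr_fun hxy i
  exact ext_inner_left ℝ fun v => LinearMap.congr_fun h v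

theorem whittle_likelihood_convex_general (K L : ℕ)
    (φ : Fin L → EuclideanSpace ℝ (Fin K)) (I : Fin L → ℝ) (hI : ∀ ℓ, 0 ≤ I ℓ)
    (F : EuclideanSpace ℝ (Fin K) → ℝ)
    (hF : ∀ Y : EuclideanSpace ℝ (Fin K),
      F Y = ∑ ℓ : Fin L, (I ℓ * Real.exp (-(inner ℝ (φ ℓ) Y : ℝ)) + (inner ℝ (φ ℓ) Y : ℝ))) :
    ConvexOn ℝ Set.univ F ∧
    ((∀ ℓ, 0 < I ℓ) → Submodule.span ℝ (Set.range φ) = ⊤ →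
      StrictConvexOn ℝ Set.univ F) := by
  set A := LinearMap.pi fun ℓ => innerₗ (EuclideanSpace ℝ (Fin K)) (φ ℓ)
  have hFA : F = (fun z : Fin L → ℝ => ∑ ℓ, (I ℓ * exp (-z ℓ) + z ℓ)) ∘ A :=
    funext fun Y => hF Y
  rw [hFA, ← preimage_univ (f := A)]
  constructor
  · exact (convexOn_sum_pi fun ℓ => convexOn_const_mul_exp_neg_add (hI ℓ)).comp_linearMap A
  · intro hpos hspan
    exact (strictConvexOn_sum_pi fun ℓ => strictConvexOn_const_mul_exp_neg_add
      (hpos ℓ)).comp_linearMap (LinearMap.pi_innerₗ_injective hspan)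

/-- The negative log-Whittle likelihood is convex on `ℝ^K`; if moreover all periodogram
ordinates are strictly positive and the basis vectors `φ_ℓ` span `ℝ^K`, it is strictly
convex. -/
theorem whittle_likelihood_convex (K L : ℕ) (hK : 1 ≤ K)
    (φ : Fin L → EuclideanSpace ℝ (Fin K)) (I : Fin L → ℝ) (hI : ∀ ℓ, 0 ≤ I ℓ)
    (F : EuclideanSpace ℝ (Fin K) → ℝ)
    (hF : ∀ Y : EuclideanSpace ℝ (Fin K),
      F Y = ∑ ℓ : Fin L, (I ℓ * Real.exp (-(inner ℝ (φ ℓ) Y : ℝ)) + (inner ℝ (φ ℓ) Y : ℝ))) :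
    ConvexOn ℝ Set.univ F ∧
    ((∀ ℓ, 0 < I ℓ) → Submodule.span ℝ (Set.range φ) = ⊤ →
      StrictConvexOn ℝ Set.univ F) :=
  whittle_likelihood_convex_general K L φ I hI F hF
end

section
/- Let X be a real N×P matrix with XᵀX invertible and Y a real N×K matrix, and let B̂_ols = (XᵀX)^{−1}XᵀY. Let M = YᵀX(XᵀX)^{−1}XᵀY, a symmetric positive semidefinite K×K matrix, with orthonormal eigenvectors û_1, …, û_K ordered by non-increasing eigenvalues. Then for any integer 1 ≤ m ≤ min(P, K), the matrix B̂_rrr = B̂_ols · ( Σ_{j=1}^{m} û_j û_jᵀ ) minimizes the squared Frobenius norm ‖Y − X B‖² over all P×K real matrices B of rank at most m, i.e., over all B of the form B = C Dᵀ with C ∈ ℝ^{P×m} and D ∈ ℝ^{K×m}. -/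
/-!
Let `Ŷ = X B̂_ols` be the least-squares fit. The normal equations `Xᵀ (Y - Ŷ) = 0` split
`‖Y - X B‖² = ‖Y - Ŷ‖² + ‖Ŷ - X B‖²`, so only the second term depends on `B`. Expanding it in
the orthonormal basis `u` gives `Σₖ ‖aₖ - X B uₖ‖²` with `aₖ = Ŷ uₖ`; since `ŶᵀŶ = M`, the
`aₖ` are orthogonal with `‖aₖ‖² = μₖ`. For `B = C Dᵀ` all `X B uₖ` lie in a subspace `V` of
dimension at most `m`, so the sum is at least `Σₖ (μₖ - ‖π_V aₖ‖²)`. Writing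
`‖π_V aₖ‖² = μₖ pₖ`, the weights satisfy `0 ≤ pₖ ≤ 1` and, by Bessel's inequality for the
normalised `aₖ`, `Σₖ pₖ ≤ dim V ≤ m`; as `μ` is decreasing this forces
`Σₖ μₖ pₖ ≤ Σ_{k<m} μₖ`. The bound `Σ_{k≥m} μₖ` is attained by `B̂_rrr`, for which
`X B̂_rrr uₖ` is `aₖ` when `k < m` and `0` otherwise.
-/

open Matrix Finset RealInnerProductSpace

section InnerProductSpace

variable {E : Type*} [NormedAddCommGroup E] [InnerProductSpace ℝ E]

theorem Orthonormal.sum_norm_starProjection_sq_le_finrank {ι : Type*} [Fintype ι] {e : ι → E}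
    (he : Orthonormal ℝ e) (V : Submodule ℝ E) [FiniteDimensional ℝ V] :
    ∑ k, ‖V.starProjection (e k)‖ ^ 2 ≤ Module.finrank ℝ V := by
  let f := stdOrthonormalBasis ℝ V
  have parseval (x : E) : ‖V.starProjection x‖ ^ 2 = ∑ i, ‖⟪x, (f i : E)⟫‖ ^ 2 := by
    rw [Submodule.starProjection_apply, Submodule.norm_coe, ← f.sum_sq_norm_inner_right]
    simp_rw [Submodule.inner_orthogonalProjectionOnto_eq_of_mem_left, real_inner_comm]
  calc ∑ k, ‖V.starProjection (e k)‖ ^ 2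
      = ∑ i, ∑ k, ‖⟪e k, (f i : E)⟫‖ ^ 2 := by
        simp_rw [parseval]
        exact Finset.sum_comm
    _ ≤ ∑ i, ‖(f i : E)‖ ^ 2 := by gcongr with i; exact he.sum_inner_products_le _
    _ = Module.finrank ℝ V := by simp [Submodule.norm_coe, f.orthonormal.1 _]

theorem sum_norm_starProjection_sq_div_le_finrank {ι : Type*} [Fintype ι] {a : ι → E}
    (ha : Pairwise fun k l => ⟪a k, a l⟫ = 0) (V : Submodule ℝ E) [FiniteDimensional ℝ V] :
    ∑ k, ‖V.starProjection (a k)‖ ^ 2 / ‖a k‖ ^ 2 ≤ Module.finrank ℝ V := by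
  classical
  let e : {k // a k ≠ 0} → E := fun k => ‖a k‖⁻¹ • a k
  have he : Orthonormal ℝ e := by
    rw [orthonormal_iff_ite]
    rintro ⟨k, hk⟩ ⟨l, hl⟩
    simp only [e, real_inner_smul_left, real_inner_smul_right, Subtype.mk.injEq]
    split_ifs with hkl
    · subst hkl
      rw [real_inner_self_eq_norm_sq]
      field_simp
    · rw [ha hkl, mul_zero, mul_zero]
  have hterm : ∀ k, ‖V.starProjection (a k)‖ ^ 2 / ‖a k‖ ^ 2
      = ‖V.starProjection (‖a k‖⁻¹ • a k)‖ ^ 2 := by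
    intro k
    rw [map_smul, norm_smul, norm_inv, norm_norm, mul_pow, inv_pow, div_eq_inv_mul]
  calc ∑ k, ‖V.starProjection (a k)‖ ^ 2 / ‖a k‖ ^ 2
      = ∑ k ∈ univ with a k ≠ 0, ‖V.starProjection (‖a k‖⁻¹ • a k)‖ ^ 2 := by
        simp_rw [hterm]
        exact (sum_filter_of_ne (p := (a · ≠ 0)) fun k _ h hk => h (by simp [hk])).symm
    _ = ∑ k : {k // a k ≠ 0}, ‖V.starProjection (e k)‖ ^ 2 := sum_subtype _ (by simp) _
    _ ≤ Module.finrank ℝ V := he.sum_norm_starProjection_sq_le_finrank V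

theorem sum_mul_le_sum_of_threshold {ι : Type*} [Fintype ι] [DecidableEq ι] (s : Finset ι)
    {μ p : ι → ℝ} {c : ℝ} (hc : 0 ≤ c) (hs : ∀ k ∈ s, c ≤ μ k) (hsc : ∀ k ∉ s, μ k ≤ c)
    (hp0 : ∀ k, 0 ≤ p k) (hp1 : ∀ k, p k ≤ 1) (hps : ∑ k, p k ≤ #s) :
    ∑ k, μ k * p k ≤ ∑ k ∈ s, μ k := by
  have hin : 0 ≤ ∑ k ∈ s, (μ k - c) * (1 - p k) :=
    sum_nonneg fun k hk => mul_nonneg (sub_nonneg.2 (hs k hk)) (sub_nonneg.2 (hp1 k))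
  have hout : 0 ≤ ∑ k ∈ sᶜ, (c - μ k) * p k :=
    sum_nonneg fun k hk => mul_nonneg (sub_nonneg.2 (hsc k (mem_compl.1 hk))) (hp0 k)
  have hmass : 0 ≤ c * (#s - ∑ k, p k) := mul_nonneg hc (sub_nonneg.2 hps)
  rw [← sum_add_sum_compl s p] at hmass
  rw [← sum_add_sum_compl s]
  simp only [sub_mul, mul_sub, mul_one, sum_sub_distrib, ← mul_sum, sum_const,
    nsmul_eq_mul] at hin hout hmass
  linarith

theorem Submodule.norm_sq_sub_norm_starProjection_sq_le (V : Submodule ℝ E)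
    [V.HasOrthogonalProjection] (x : E) {z : E} (hz : z ∈ V) :
    ‖x‖ ^ 2 - ‖V.starProjection x‖ ^ 2 ≤ ‖x - z‖ ^ 2 := by
  have hmin : ‖x - V.starProjection x‖ ≤ ‖x - z‖ := by
    rw [V.starProjection_minimal]
    exact ciInf_le ⟨0, by rintro _ ⟨w, rfl⟩; positivity⟩ (⟨z, hz⟩ : V)
  have hpyth : ‖x‖ ^ 2 = ‖V.starProjection x‖ ^ 2 + ‖x - V.starProjection x‖ ^ 2 := by
    simpa [V.starProjection_orthogonal'] using norm_sq_eq_add_norm_sq_starProjection x V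
  rw [hpyth, add_sub_cancel_left]
  gcongr

theorem sum_filter_le_sum_norm_sub_sq_of_finrank_le {K m : ℕ} {a z : Fin K → E} {μ : Fin K → ℝ}
    (ha : ∀ k l, ⟪a k, a l⟫ = if k = l then μ k else 0) (hμ : Antitone μ)
    {V : Submodule ℝ E} [FiniteDimensional ℝ V] (hz : ∀ k, z k ∈ V)
    (hV : Module.finrank ℝ V ≤ m) :
    ∑ k ∈ univ.filter (fun k : Fin K => m ≤ (k : ℕ)), μ k ≤ ∑ k, ‖a k - z k‖ ^ 2 := by
  have hsq (k : Fin K) : ‖a k‖ ^ 2 = μ k := by rw [← real_inner_self_eq_norm_sq, ha, if_pos rfl]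
  have hμ0 : ∀ k, 0 ≤ μ k := fun k => hsq k ▸ sq_nonneg _
  set P := V.starProjection
  set p : Fin K → ℝ := fun k => ‖P (a k)‖ ^ 2 / ‖a k‖ ^ 2
  have hweight : ∀ k, μ k * p k = ‖P (a k)‖ ^ 2 := by
    intro k
    rw [← hsq]
    by_cases hk : a k = 0
    · simp [hk]
    · exact mul_div_cancel₀ _ (by positivity)
  have hp1 : ∀ k, p k ≤ 1 := fun k =>
    div_le_one_of_le₀ (by gcongr; exact V.norm_starProjection_apply_le _) (by positivity)
  have hps : ∑ k, p k ≤ #{k : Fin K | (k : ℕ) < m} := by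
    rw [Fin.card_filter_val_lt, Nat.cast_min]
    refine le_min ?_ ?_
    · simpa using sum_le_sum fun k (_ : k ∈ univ) => hp1 k
    · have horth : Pairwise fun k l => ⟪a k, a l⟫ = 0 := fun k l hkl => (ha k l).trans (if_neg hkl)
      exact (sum_norm_starProjection_sq_div_le_finrank horth V).trans (by exact_mod_cast hV)
  have hhead := sum_mul_le_sum_of_threshold {k : Fin K | (k : ℕ) < m} (μ := μ)
    (c := if h : m < K then μ ⟨m, h⟩ else 0) (by split_ifs <;> simp [hμ0])
    (fun k hk => by
      split_ifs with h
      · exact hμ (Fin.le_def.2 (by simp at hk ⊢; omega))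
      · exact hμ0 k)
    (fun k hk => by
      have hmk : m ≤ (k : ℕ) := by simpa using hk
      rw [dif_pos (hmk.trans_lt k.2)]
      exact hμ (Fin.le_def.2 hmk))
    (fun k => by positivity) hp1 hps
  have hsplit := sum_filter_add_sum_filter_not univ (fun k : Fin K => (k : ℕ) < m) μ
  simp only [not_lt] at hsplit
  calc ∑ k ∈ univ.filter (fun k : Fin K => m ≤ (k : ℕ)), μ k
      = ∑ k, μ k - ∑ k ∈ univ.filter (fun k : Fin K => (k : ℕ) < m), μ k := by linarith
    _ ≤ ∑ k, (‖a k‖ ^ 2 - ‖P (a k)‖ ^ 2) := by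
      simp only [sum_sub_distrib, ← hweight, hsq]
      linarith
    _ ≤ ∑ k, ‖a k - z k‖ ^ 2 :=
      sum_le_sum fun k _ => V.norm_sq_sub_norm_starProjection_sq_le (a k) (hz k)

end InnerProductSpace

namespace Matrix

variable {m n : Type*} [Fintype m] [Fintype n]

theorem sum_sq_eq_trace_transpose_mul (A : Matrix m n ℝ) :
    ∑ i, ∑ j, A i j ^ 2 = (Aᵀ * A).trace := by
  simp only [trace, diag, mul_apply, transpose_apply, sq]
  exact sum_comm

theorem sum_sq_add_of_transpose_mul_eq_zero {R S : Matrix m n ℝ} (h : Rᵀ * S = 0) :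
    ∑ i, ∑ j, (R + S) i j ^ 2 = ∑ i, ∑ j, R i j ^ 2 + ∑ i, ∑ j, S i j ^ 2 := by
  have h' : Sᵀ * R = 0 := by rw [← transpose_transpose R, ← transpose_mul, h, transpose_zero]
  simp only [sum_sq_eq_trace_transpose_mul, transpose_add, Matrix.add_mul, Matrix.mul_add, h, h',
    add_zero, zero_add, trace_add]

theorem mul_transpose_eq_one_of_dotProduct {u : n → n → ℝ} [DecidableEq n]
    (hortho : ∀ i j, u i ⬝ᵥ u j = if i = j then (1 : ℝ) else 0) : of u * (of u)ᵀ = 1 := by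
  ext i j
  rw [mul_apply, one_apply, ← hortho]
  rfl

theorem sum_sq_eq_sum_norm_mulVec_sq [DecidableEq n] (A : Matrix m n ℝ) {u : n → n → ℝ}
    (hortho : ∀ i j, u i ⬝ᵥ u j = if i = j then (1 : ℝ) else 0) :
    ∑ i, ∑ j, A i j ^ 2 = ∑ k, ‖WithLp.toLp 2 (A *ᵥ u k)‖ ^ 2 := by
  have hU : (of u)ᵀ * of u = 1 := mul_eq_one_comm.mp (mul_transpose_eq_one_of_dotProduct hortho)
  have hcol : ∀ i k, (A *ᵥ u k) i = (A * (of u)ᵀ) i k := fun _ _ => rfl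
  calc ∑ i, ∑ j, A i j ^ 2 = ((of u)ᵀ * of u * (Aᵀ * A)).trace := by
        rw [hU, Matrix.one_mul, sum_sq_eq_trace_transpose_mul]
    _ = ((A * (of u)ᵀ)ᵀ * (A * (of u)ᵀ)).trace := by
        rw [← trace_mul_cycle, transpose_mul, transpose_transpose]
        simp only [Matrix.mul_assoc]
    _ = ∑ k, ‖WithLp.toLp 2 (A *ᵥ u k)‖ ^ 2 := by
        simp only [← sum_sq_eq_trace_transpose_mul, EuclideanSpace.norm_sq_eq, Real.norm_eq_abs,
          sq_abs, hcol]
        exact sum_comm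

theorem inner_mulVec_eq_of_eigenvector (A : Matrix m n ℝ) {u : n → n → ℝ} {μ : n → ℝ}
    [DecidableEq n] (hortho : ∀ i j, u i ⬝ᵥ u j = if i = j then (1 : ℝ) else 0)
    (heig : ∀ j, (Aᵀ * A) *ᵥ u j = μ j • u j) (k l : n) :
    ⟪WithLp.toLp 2 (A *ᵥ u k), WithLp.toLp 2 (A *ᵥ u l)⟫ = if k = l then μ k else 0 := by
  rw [EuclideanSpace.inner_eq_star_dotProduct, star_trivial, dotProduct_comm, dotProduct_mulVec,
    ← mulVec_transpose, mulVec_mulVec, heig, smul_dotProduct, hortho, smul_eq_mul]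
  split_ifs with h <;> simp [h]

theorem sum_vecMulVec_self_mulVec [DecidableEq n] {u : n → n → ℝ}
    (hortho : ∀ i j, u i ⬝ᵥ u j = if i = j then (1 : ℝ) else 0) (s : Finset n) (k : n) :
    (∑ j ∈ s, vecMulVec (u j) (u j)) *ᵥ u k = if k ∈ s then u k else 0 := by
  simp only [sum_mulVec, vecMulVec_mulVec, op_smul_eq_smul, hortho, ite_smul, one_smul, zero_smul]
  exact sum_ite_eq' s k u

theorem transpose_mul_sub_mul_inv_mul_eq_zero {p : Type*} [DecidableEq n] {X : Matrix m n ℝ}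
    (hX : IsUnit (Xᵀ * X)) (Y : Matrix m p ℝ) :
    Xᵀ * (Y - X * ((Xᵀ * X)⁻¹ * Xᵀ * Y)) = 0 := by
  simp only [Matrix.mul_sub, ← Matrix.mul_assoc,
    mul_nonsing_inv _ ((isUnit_iff_isUnit_det _).1 hX), Matrix.one_mul, sub_self]

theorem sum_sq_sub_mul_eq_sum_sq_sub_leastSquares_add {p : Type*} [Fintype p] [DecidableEq n]
    {X : Matrix m n ℝ} (hX : IsUnit (Xᵀ * X)) (Y : Matrix m p ℝ) (B : Matrix n p ℝ) :
    ∑ i, ∑ j, (Y - X * B) i j ^ 2 = ∑ i, ∑ j, (Y - X * ((Xᵀ * X)⁻¹ * Xᵀ * Y)) i j ^ 2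
      + ∑ i, ∑ j, (X * ((Xᵀ * X)⁻¹ * Xᵀ * Y) - X * B) i j ^ 2 := by
  have hres : (Y - X * ((Xᵀ * X)⁻¹ * Xᵀ * Y))ᵀ * (X * ((Xᵀ * X)⁻¹ * Xᵀ * Y) - X * B) = 0 := by
    rw [← Matrix.mul_sub, ← Matrix.mul_assoc, ← transpose_transpose X, ← transpose_mul,
      transpose_transpose, transpose_mul_sub_mul_inv_mul_eq_zero hX, transpose_zero,
      Matrix.zero_mul]
  rw [← sum_sq_add_of_transpose_mul_eq_zero hres, sub_add_sub_cancel]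

theorem transpose_mul_self_mul_inv_mul {p : Type*} [DecidableEq n] {X : Matrix m n ℝ}
    (hX : IsUnit (Xᵀ * X)) (Y : Matrix m p ℝ) :
    (X * ((Xᵀ * X)⁻¹ * Xᵀ * Y))ᵀ * (X * ((Xᵀ * X)⁻¹ * Xᵀ * Y))
      = Yᵀ * X * (Xᵀ * X)⁻¹ * Xᵀ * Y := by
  have hcancel : ∀ Z : Matrix n p ℝ, (Xᵀ * X)⁻¹ * (Xᵀ * (X * Z)) = Z := fun Z => by
    rw [← Matrix.mul_assoc Xᵀ, ← Matrix.mul_assoc,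
      nonsing_inv_mul _ ((isUnit_iff_isUnit_det _).1 hX), Matrix.one_mul]
  simp only [transpose_mul, transpose_nonsing_inv, transpose_transpose, Matrix.mul_assoc, hcancel]

end Matrix

theorem reduced_rank_regression_general (N P K m : ℕ)
    (X : Matrix (Fin N) (Fin P) ℝ) (hX : IsUnit (Xᵀ * X))
    (Y : Matrix (Fin N) (Fin K) ℝ)
    (Bols : Matrix (Fin P) (Fin K) ℝ) (hBols : Bols = (Xᵀ * X)⁻¹ * Xᵀ * Y)
    (M : Matrix (Fin K) (Fin K) ℝ) (hM : M = Yᵀ * X * (Xᵀ * X)⁻¹ * Xᵀ * Y)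
    (u : Fin K → Fin K → ℝ) (μ : Fin K → ℝ)
    (hortho : ∀ i j : Fin K, u i ⬝ᵥ u j = if i = j then (1 : ℝ) else 0)
    (heig : ∀ j : Fin K, M.mulVec (u j) = μ j • u j)
    (hmono : ∀ i j : Fin K, i ≤ j → μ j ≤ μ i)
    (Brrr : Matrix (Fin P) (Fin K) ℝ)
    (hBrrr : Brrr = Bols *
      ∑ j ∈ Finset.univ.filter (fun j : Fin K => (j : ℕ) < m), Matrix.vecMulVec (u j) (u j)) :
    ∀ (C : Matrix (Fin P) (Fin m) ℝ) (D : Matrix (Fin K) (Fin m) ℝ),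
      ∑ i : Fin N, ∑ j : Fin K, ((Y - X * Brrr) i j) ^ 2 ≤
        ∑ i : Fin N, ∑ j : Fin K, ((Y - X * (C * Dᵀ)) i j) ^ 2 := by
  intro C D
  set a : Fin K → EuclideanSpace ℝ (Fin N) := fun k => WithLp.toLp 2 ((X * Bols) *ᵥ u k)
  have hcols (B : Matrix (Fin P) (Fin K) ℝ) : ∑ i, ∑ j, (Y - X * B) i j ^ 2
      = ∑ i, ∑ j, (Y - X * Bols) i j ^ 2 + ∑ k, ‖a k - WithLp.toLp 2 ((X * B) *ᵥ u k)‖ ^ 2 := by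
    rw [hBols, sum_sq_sub_mul_eq_sum_sq_sub_leastSquares_add hX, ← hBols,
      sum_sq_eq_sum_norm_mulVec_sq (X * Bols - X * B) hortho]
    simp only [a, sub_mulVec, WithLp.toLp_sub]
  have ha := inner_mulVec_eq_of_eigenvector (X * Bols) hortho
    (by rwa [hBols, transpose_mul_self_mul_inv_mul hX, ← hM])
  have hfit (k : Fin K) :
      (X * Brrr) *ᵥ u k = if (k : ℕ) < m then (X * Bols) *ᵥ u k else 0 := by
    rw [hBrrr, ← Matrix.mul_assoc, ← mulVec_mulVec, sum_vecMulVec_self_mulVec hortho]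
    split_ifs <;> simp_all
  let V := LinearMap.range (toLpLin 2 2 (X * C))
  have hz (k : Fin K) : WithLp.toLp 2 ((X * (C * Dᵀ)) *ᵥ u k) ∈ V :=
    ⟨WithLp.toLp 2 (Dᵀ *ᵥ u k), by
      rw [toLpLin_apply, WithLp.ofLp_toLp, mulVec_mulVec, Matrix.mul_assoc]⟩
  have hV : Module.finrank ℝ V ≤ m :=
    (LinearMap.finrank_range_le _).trans_eq finrank_euclideanSpace_fin
  rw [hcols Brrr, hcols (C * Dᵀ)]
  gcongr _ + ?_
  calc ∑ k, ‖a k - WithLp.toLp 2 ((X * Brrr) *ᵥ u k)‖ ^ 2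
      = ∑ k ∈ univ.filter (fun k : Fin K => m ≤ (k : ℕ)), μ k := by
        rw [sum_filter]
        refine sum_congr rfl fun k _ => ?_
        rw [hfit]
        split_ifs <;> try omega
        · simp [a]
        · rw [WithLp.toLp_zero, sub_zero, ← real_inner_self_eq_norm_sq, ha, if_pos rfl]
    _ ≤ _ := sum_filter_le_sum_norm_sub_sq_of_finrank_le ha hmono hz hV

/-- Reduced-rank regression (Izenman): with `B̂_ols = (XᵀX)⁻¹XᵀY` and
`M = YᵀX(XᵀX)⁻¹XᵀY` with orthonormal eigenvectors `u_j` ordered by non-increasing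
eigenvalues, the matrix `B̂_rrr = B̂_ols (Σ_{j<m} u_j u_jᵀ)` minimizes the squared Frobenius
norm `‖Y - XB‖²` over all `P×K` matrices of rank at most `m`, i.e. all `B = C Dᵀ`. -/
theorem reduced_rank_regression (N P K m : ℕ)
    (hm : 1 ≤ m) (hmP : m ≤ P) (hmK : m ≤ K)
    (X : Matrix (Fin N) (Fin P) ℝ) (hX : IsUnit (Xᵀ * X))
    (Y : Matrix (Fin N) (Fin K) ℝ)
    (Bols : Matrix (Fin P) (Fin K) ℝ) (hBols : Bols = (Xᵀ * X)⁻¹ * Xᵀ * Y)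
    (M : Matrix (Fin K) (Fin K) ℝ) (hM : M = Yᵀ * X * (Xᵀ * X)⁻¹ * Xᵀ * Y)
    (u : Fin K → Fin K → ℝ) (μ : Fin K → ℝ)
    (hortho : ∀ i j : Fin K, u i ⬝ᵥ u j = if i = j then (1 : ℝ) else 0)
    (heig : ∀ j : Fin K, M.mulVec (u j) = μ j • u j)
    (hmono : ∀ i j : Fin K, i ≤ j → μ j ≤ μ i)
    (Brrr : Matrix (Fin P) (Fin K) ℝ)
    (hBrrr : Brrr = Bols *
      ∑ j ∈ Finset.univ.filter (fun j : Fin K => (j : ℕ) < m), Matrix.vecMulVec (u j) (u j)) :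
    ∀ (C : Matrix (Fin P) (Fin m) ℝ) (D : Matrix (Fin K) (Fin m) ℝ),
      ∑ i : Fin N, ∑ j : Fin K, ((Y - X * Brrr) i j) ^ 2 ≤
        ∑ i : Fin N, ∑ j : Fin K, ((Y - X * (C * Dᵀ)) i j) ^ 2 :=
  reduced_rank_regression_general N P K m X hX Y Bols hBols M hM u μ hortho heig hmono Brrr hBrrr
end
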